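/- The optimal fractional covering ratio of the infinite square grid is 9: placing 1/9 pebbles on every vertex gives every vertex weight exactly 1, and no fractional distribution covering an n×n grid can have size less than n²/9. -/

import Mathlib

/-!
The graph distance on the grid is the Manhattan distance, so for every `u` the weights
`2^{-d(u,v)}` factor as `2^{-|a|} * 2^{-|b|}` and sum to `(∑_{a : ℤ} 2^{-|a|})² = 3² = 9`.
For the lower bound, add up the covering inequalities `1 ≤ W_D(u)` over the `n²` vertices `u`
of the square and exchange the sums: a pebble at `v` is counted with total weight
`∑_u 2^{-d(u,v)} ≤ 9`, so `n² ≤ 9 |D|`.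
-/

/-- The infinite square grid: vertices `ℤ × ℤ`, adjacency iff Manhattan distance 1. -/
def gridGraph : SimpleGraph (ℤ × ℤ) where
  Adj p q := (p.1 - q.1).natAbs + (p.2 - q.2).natAbs = 1
  symm := ⟨by intro p q h; omega⟩
  loopless := ⟨by intro p h; simp at h⟩

open Finset

namespace SimpleGraph

variable {V : Type*} (G : SimpleGraph V) (d : V → V → ℕ)

theorem le_length_of_forall_adj_le_add_one (hd : ∀ v, d v v = 0)
    (hadj : ∀ u w v, G.Adj u w → d u v ≤ d w v + 1) {u v : V} (p : G.Walk u v) :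
    d u v ≤ p.length := by
  induction p with
  | nil => simp [hd]
  | cons h p ih => simpa using (hadj _ _ _ h).trans (Nat.add_le_add_right ih 1)

theorem exists_walk_length_le_of_forall_exists_adj_lt
    (hstep : ∀ u v, u ≠ v → ∃ w, G.Adj u w ∧ d w v < d u v) (u v : V) :
    ∃ p : G.Walk u v, p.length ≤ d u v := by
  induction h : d u v using Nat.strong_induction_on generalizing u with
  | _ n ih =>
    by_cases huv : u = v
    · subst huv; exact ⟨.nil, by simp⟩
    · obtain ⟨w, hadj, hlt⟩ := hstep u v huv
      obtain ⟨p, hp⟩ := ih _ (h ▸ hlt) w rfl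
      exact ⟨.cons hadj p, by simp; omega⟩

theorem dist_eq_of_adj_le_add_one_of_exists_adj_lt (hd : ∀ v, d v v = 0)
    (hadj : ∀ u w v, G.Adj u w → d u v ≤ d w v + 1)
    (hstep : ∀ u v, u ≠ v → ∃ w, G.Adj u w ∧ d w v < d u v) (u v : V) :
    G.dist u v = d u v := by
  obtain ⟨p, hp⟩ := exists_walk_length_le_of_forall_exists_adj_lt G d hstep u v
  obtain ⟨q, hq⟩ := Reachable.exists_walk_length_eq_dist ⟨p⟩
  have hlower := le_length_of_forall_adj_le_add_one G d hd hadj q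
  have hupper := G.dist_le p
  omega

end SimpleGraph

theorem gridGraph_dist (u v : ℤ × ℤ) :
    gridGraph.dist u v = (u.1 - v.1).natAbs + (u.2 - v.2).natAbs := by
  refine gridGraph.dist_eq_of_adj_le_add_one_of_exists_adj_lt
    (fun u v => (u.1 - v.1).natAbs + (u.2 - v.2).natAbs) (by simp)
    (fun u w v (h : _ = 1) => by omega) (fun u v huv => ?_) u v
  rw [Ne, Prod.ext_iff, not_and_or] at huv
  refine ⟨if u.1 < v.1 then (u.1 + 1, u.2) else if v.1 < u.1 then (u.1 - 1, u.2)
      else if u.2 < v.2 then (u.1, u.2 + 1) else (u.1, u.2 - 1), ?_, ?_⟩ <;>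
    split_ifs <;> simp [gridGraph] <;> omega

theorem hasSum_pow_natAbs {r : ℝ} (h₀ : 0 ≤ r) (h₁ : r < 1) :
    HasSum (fun a : ℤ => r ^ a.natAbs) ((1 + r) / (1 - r)) := by
  have hgeom := hasSum_geometric_of_lt_one h₀ h₁
  have hsplit : (1 + r) / (1 - r) = (1 - r)⁻¹ + (1 - r)⁻¹ - r ^ (0 : ℤ).natAbs := by
    field_simp [sub_ne_zero.2 h₁.ne']
    ring
  rw [hsplit]
  exact .of_nat_of_neg (by simpa using hgeom) (by simpa using hgeom)

theorem hasSum_pow_natAbs_add_natAbs {r : ℝ} (h₀ : 0 ≤ r) (h₁ : r < 1) :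
    HasSum (fun p : ℤ × ℤ => r ^ (p.1.natAbs + p.2.natAbs)) (((1 + r) / (1 - r)) ^ 2) := by
  have h := hasSum_pow_natAbs h₀ h₁
  have hs : Summable fun p : ℤ × ℤ => r ^ p.1.natAbs * r ^ p.2.natAbs :=
    h.summable.mul_of_nonneg h.summable (fun _ => by positivity) fun _ => by positivity
  simp only [pow_add, sq]
  exact HasSum.mul (f := fun a : ℤ => r ^ a.natAbs) (g := fun a : ℤ => r ^ a.natAbs) h h hs

theorem hasSum_pow_gridGraph_dist {r : ℝ} (h₀ : 0 ≤ r) (h₁ : r < 1) (u : ℤ × ℤ) :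
    HasSum (fun v => r ^ gridGraph.dist u v) (((1 + r) / (1 - r)) ^ 2) := by
  have h := (Equiv.subLeft u).hasSum_iff.2 (hasSum_pow_natAbs_add_natAbs h₀ h₁)
  simpa [gridGraph_dist, Function.comp_def] using h

theorem card_le_mul_tsum_of_one_le_tsum {V : Type*} (K : V → V → ℝ) (S : Finset V) (C : ℝ)
    (hK : ∀ u v, 0 ≤ K u v) (hC : ∀ v, ∑ u ∈ S, K u v ≤ C) (D : V → ℝ) (hD : ∀ v, 0 ≤ D v)
    (hDs : Summable D) (hcover : ∀ u ∈ S, 1 ≤ ∑' v, D v * K u v) :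
    (#S : ℝ) ≤ C * ∑' v, D v := by
  have hsummable : ∀ u ∈ S, Summable fun v => D v * K u v := fun u hu =>
    (hDs.mul_left C).of_nonneg_of_le (fun v => mul_nonneg (hD v) (hK u v)) fun v => by
      rw [mul_comm C]
      exact mul_le_mul_of_nonneg_left
        ((single_le_sum (fun u _ => hK u v) hu).trans (hC v)) (hD v)
  calc (#S : ℝ) = ∑ _u ∈ S, (1 : ℝ) := by simp
    _ ≤ ∑ u ∈ S, ∑' v, D v * K u v := sum_le_sum hcover
    _ = ∑' v, D v * ∑ u ∈ S, K u v := by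
      rw [← Summable.tsum_finsetSum hsummable]
      simp_rw [mul_sum]
    _ ≤ ∑' v, D v * C := by
      refine Summable.tsum_le_tsum (fun v => mul_le_mul_of_nonneg_left (hC v) (hD v)) ?_
        (hDs.mul_right C)
      simp_rw [mul_sum]
      exact summable_sum hsummable
    _ = C * ∑' v, D v := by rw [tsum_mul_right, mul_comm]

theorem optimal_fractional_covering_ratio (n : ℕ) :
    (∀ u : ℤ × ℤ, ∑' v : ℤ × ℤ, (1 / 9 : ℝ) * (1 / 2) ^ (gridGraph.dist u v) = 1) ∧
    (∀ D : ℤ × ℤ → ℝ, (∀ v, 0 ≤ D v) → Summable D →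
      (∀ u : ℤ × ℤ, 0 ≤ u.1 → u.1 < (n : ℤ) → 0 ≤ u.2 → u.2 < (n : ℤ) →
        1 ≤ ∑' v : ℤ × ℤ, D v * (1 / 2) ^ (gridGraph.dist u v)) →
      (n : ℝ) ^ 2 / 9 ≤ ∑' v, D v) := by
  have hweight (u : ℤ × ℤ) : HasSum (fun v => (1 / 2 : ℝ) ^ gridGraph.dist u v) 9 := by
    convert hasSum_pow_gridGraph_dist (r := 1 / 2) (by norm_num) (by norm_num) u using 1
    norm_num
  refine ⟨fun u => by rw [tsum_mul_left, (hweight u).tsum_eq]; norm_num, ?_⟩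
  intro D hD hDs hcover
  set S := Ico (0 : ℤ) n ×ˢ Ico (0 : ℤ) n
  have hcard : (#S : ℝ) = n ^ 2 := by simp [S, sq]
  have hcol (v : ℤ × ℤ) : ∑ u ∈ S, (1 / 2 : ℝ) ^ gridGraph.dist u v ≤ 9 := by
    simp only [gridGraph.dist_comm (v := v)]
    exact sum_le_hasSum S (fun _ _ => by positivity) (hweight v)
  have hbound := card_le_mul_tsum_of_one_le_tsum _ S 9 (fun _ _ => by positivity) hcol D hD hDs
    fun u hu => by
      simp only [S, mem_product, mem_Ico] at hu
      exact hcover u hu.1.1 hu.1.2 hu.2.1 hu.2.2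
  linarith
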